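/- Let ρ₀ ∈ L^∞(ℝ^d) with ρ₀ ≥ 0, let r ≥ ‖ρ₀‖_{L^∞}, and let γ, T̃ > 0 be such that F maps B_{T,γ}(r) into itself for all T ∈ [0, T̃]. Then there exists T* ∈ (0, T̃] and a constant C < 1 such that for all ρ, ψ ∈ B_{T*,γ}(r) with ρ_0 = ψ_0 = ρ₀ one has ‖F(ρ) − F(ψ)‖_{T*,γ} ≤ C ‖ρ − ψ‖_{T*,γ}. -/

import Mathlib

/-!
On functions with values in `[0, R]`, both `h(·, x)` and `R₂(·, x)` are Lipschitz for the sup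
norm: every term of `R₂` integrates a product of factors bounded by `R` or by `1` against a
kernel of fixed mass `⟨c₁⟩`, `2⟨c₁⟩` or `⟨c₂⟩`, and `exp (-·)` is `1`-Lipschitz on `[0, ∞)`, so
that `e^{-∫ φ ρ}` is `⟨φ⟩`-Lipschitz in `ρ`. Elements of `B_{T,γ}(r)` take values in
`[0, r e^{γ⟨c₂⟩T}]`, and the variation-of-constants formula defining `F` then gives
`|F(ρ)_t − F(ψ)_t| ≤ K t ‖ρ − ψ‖_{T,γ}` with `K` uniform in `T ≤ T̃`. Any `T* ≤ 1 / (2K)`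
yields the contraction constant `C = 1/2`.
-/

open MeasureTheory Set

noncomputable section

/-- Euclidean space `ℝ^d`, modeled as functions `Fin d → ℝ`. -/
abbrev Rd (d : ℕ) := Fin d → ℝ

/-- The (sup) `L^∞` norm of a function on `ℝ^d`. -/
def linf {d : ℕ} (f : Rd d → ℝ) : ℝ := ⨆ x, |f x|

/-- Membership in `L^∞(ℝ^d)`: measurable and (everywhere) bounded. -/
def MemLinf {d : ℕ} (f : Rd d → ℝ) : Prop := Measurable f ∧ ∃ M : ℝ, ∀ x, |f x| ≤ M

/-- `h(ρ,x) = (1/2) ∬ (c₁(x,y;z)+c₁(y,x;z)) ρ(y) dy dz + ⟨c₂⟩`. -/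
def hker {d : ℕ} (c₁ : Rd d → Rd d → Rd d → ℝ) (C2 : ℝ) (ρ : Rd d → ℝ) (x : Rd d) : ℝ :=
  1/2 * (∫ y, ∫ z, (c₁ x y z + c₁ y x z) * ρ y) + C2

/-- `R₂(ρ,x)`, the positive part of the right-hand side of the kinetic equation. -/
def R2 {d : ℕ} (c₁ : Rd d → Rd d → Rd d → ℝ) (c₂ : Rd d → Rd d → ℝ)
    (φ₁ φ₂ : Rd d → ℝ) (ρ : Rd d → ℝ) (x : Rd d) : ℝ :=
  1/2 * (∫ y, ∫ z, c₁ y z x * Real.exp (-∫ u, φ₁ (x - u) * ρ u) * ρ y * ρ z)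
    + 1/2 * (∫ y, ∫ z, (c₁ x y z + c₁ y x z) *
        (1 - Real.exp (-∫ u, φ₁ (z - u) * ρ u)) * ρ x * ρ y)
    + (∫ y, c₂ y x * Real.exp (-∫ u, φ₂ (x - u) * ρ u) * ρ y)
    + (∫ y, c₂ x y * (1 - Real.exp (-∫ u, φ₂ (y - u) * ρ u)) * ρ x)

/-- The fixed point map `F` given by the right-hand side of the integral equation. -/
def Fmap {d : ℕ} (c₁ : Rd d → Rd d → Rd d → ℝ) (c₂ : Rd d → Rd d → ℝ)
    (φ₁ φ₂ : Rd d → ℝ) (C2 : ℝ) (ρ₀ : Rd d → ℝ) (ρ : ℝ → Rd d → ℝ) (t : ℝ) (x : Rd d) : ℝ :=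
  ρ₀ x * Real.exp (-∫ s in (0:ℝ)..t, hker c₁ C2 (ρ s) x)
    + ∫ s in (0:ℝ)..t, R2 c₁ c₂ φ₁ φ₂ (ρ s) x * Real.exp (-∫ σ in s..t, hker c₁ C2 (ρ σ) x)

/-- The weighted norm `‖ρ‖_{T,γ} = sup_{t∈[0,T]} e^{-γ⟨c₂⟩t} ‖ρ_t‖_{L^∞}`. -/
def normTg {d : ℕ} (T γ C2 : ℝ) (ρ : ℝ → Rd d → ℝ) : ℝ :=
  ⨆ t : Icc (0:ℝ) T, Real.exp (-(γ * C2 * t.1)) * linf (ρ t.1)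

/-- Continuity on `S ⊆ ℝ` of a curve of functions, in the `L^∞` norm. -/
def LinfContOn {d : ℕ} (S : Set ℝ) (ρ : ℝ → Rd d → ℝ) : Prop :=
  ∀ t ∈ S, ∀ ε > 0, ∃ δ > 0, ∀ s ∈ S, |s - t| < δ → linf (fun x => ρ s x - ρ t x) < ε

/-- Membership in the ball `B_{T,γ}(r) ⊆ C([0,T] → L^∞)`. -/
def memB {d : ℕ} (T γ C2 r : ℝ) (ρ : ℝ → Rd d → ℝ) : Prop :=
  LinfContOn (Icc 0 T) ρ ∧ (∀ t ∈ Icc (0:ℝ) T, MemLinf (ρ t)) ∧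
    (∀ t ∈ Icc (0:ℝ) T, ∀ x, 0 ≤ ρ t x) ∧ normTg T γ C2 ρ ≤ r

/-- Differentiability at `t` (within `S ⊆ ℝ`) of a curve, in the `L^∞` norm,
with derivative `g`. -/
def HasLinfDerivWithinAt {d : ℕ} (ρ : ℝ → Rd d → ℝ) (g : Rd d → ℝ) (S : Set ℝ) (t : ℝ) : Prop :=
  ∀ ε > 0, ∃ δ > 0, ∀ s ∈ S, |s - t| < δ →
    linf (fun x => ρ s x - ρ t x - (s - t) * g x) ≤ ε * |s - t|

/-- The right-hand side of the kinetic equation: `−ρ(x) h(ρ,x) + R₂(ρ,x)`. -/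
def kderiv {d : ℕ} (c₁ : Rd d → Rd d → Rd d → ℝ) (c₂ : Rd d → Rd d → ℝ)
    (φ₁ φ₂ : Rd d → ℝ) (C2 : ℝ) (ρ : Rd d → ℝ) : Rd d → ℝ :=
  fun x => -(ρ x) * hker c₁ C2 ρ x + R2 c₁ c₂ φ₁ φ₂ ρ x

/-- `ρ` is a (local) classical solution of the kinetic equation on `[0,T]` with initial
value `ρ₀`: nonnegative and `L^∞`-valued, continuously differentiable in the `L^∞` norm,
and satisfying `d/dt ρ_t = −ρ_t·h(ρ_t,·) + R₂(ρ_t,·)`, `ρ_0 = ρ₀`. -/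
def IsSol {d : ℕ} (c₁ : Rd d → Rd d → Rd d → ℝ) (c₂ : Rd d → Rd d → ℝ)
    (φ₁ φ₂ : Rd d → ℝ) (C2 : ℝ) (ρ₀ : Rd d → ℝ) (T : ℝ) (ρ : ℝ → Rd d → ℝ) : Prop :=
  (∀ t ∈ Icc (0:ℝ) T, MemLinf (ρ t)) ∧ (∀ t ∈ Icc (0:ℝ) T, ∀ x, 0 ≤ ρ t x) ∧
    ρ 0 = ρ₀ ∧
    (∀ t ∈ Icc (0:ℝ) T, HasLinfDerivWithinAt ρ (kderiv c₁ c₂ φ₁ φ₂ C2 (ρ t)) (Icc 0 T) t) ∧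
    LinfContOn (Icc 0 T) (fun t => kderiv c₁ c₂ φ₁ φ₂ C2 (ρ t))

lemma abs_exp_neg_sub_exp_neg_le {a b : ℝ} (ha : 0 ≤ a) (hb : 0 ≤ b) :
    |Real.exp (-a) - Real.exp (-b)| ≤ |a - b| := by
  wlog hba : b ≤ a generalizing a b
  · rw [abs_sub_comm, abs_sub_comm a]
    exact this hb ha (le_of_not_ge hba)
  have hexp : Real.exp (b - a) ≤ 1 := Real.exp_le_one_iff.2 (by linarith)
  rw [abs_sub_comm, abs_of_nonneg (sub_nonneg.2 (Real.exp_le_exp.2 (by linarith))),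
    abs_of_nonneg (sub_nonneg.2 hba)]
  calc Real.exp (-b) - Real.exp (-a) = Real.exp (-b) * (1 - Real.exp (b - a)) := by
        rw [mul_sub, mul_one, ← Real.exp_add]; ring_nf
    _ ≤ 1 * (a - b) := mul_le_mul (Real.exp_le_one_iff.2 (by linarith))
        (by linarith [Real.add_one_le_exp (b - a)]) (by linarith) zero_le_one
    _ = a - b := one_mul _

lemma abs_mul_le_of_abs_le {a b A B : ℝ} (ha : |a| ≤ A) (hb : |b| ≤ B) : |a * b| ≤ A * B := by
  rw [abs_mul]
  exact mul_le_mul ha hb (abs_nonneg b) ((abs_nonneg a).trans ha)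

lemma abs_mul_sub_mul_le {a b a' b' A B Da Db : ℝ} (ha : |a| ≤ A) (hb' : |b'| ≤ B)
    (hda : |a - a'| ≤ Da) (hdb : |b - b'| ≤ Db) : |a * b - a' * b'| ≤ Da * B + A * Db :=
  calc |a * b - a' * b'| = |(a - a') * b' + a * (b - b')| := by ring_nf
    _ ≤ |(a - a') * b'| + |a * (b - b')| := abs_add_le _ _
    _ ≤ Da * B + A * Db := add_le_add (abs_mul_le_of_abs_le hda hb') (abs_mul_le_of_abs_le ha hdb)

lemma abs_half_add_half_add_add_sub_le (a₁ a₂ a₃ a₄ b₁ b₂ b₃ b₄ : ℝ) :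
    |1 / 2 * a₁ + 1 / 2 * a₂ + a₃ + a₄ - (1 / 2 * b₁ + 1 / 2 * b₂ + b₃ + b₄)|
      ≤ 1 / 2 * |a₁ - b₁| + 1 / 2 * |a₂ - b₂| + |a₃ - b₃| + |a₄ - b₄| := by
  rw [abs_le]
  constructor <;> linarith [le_abs_self (a₁ - b₁), neg_abs_le (a₁ - b₁), le_abs_self (a₂ - b₂),
    neg_abs_le (a₂ - b₂), le_abs_self (a₃ - b₃), neg_abs_le (a₃ - b₃), le_abs_self (a₄ - b₄),
    neg_abs_le (a₄ - b₄)]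

section Integral

variable {α β : Type*} [MeasurableSpace α] [MeasurableSpace β] {μ : Measure α} {ν : Measure β}

lemma abs_integral_mul_sub_integral_mul_le {k f g : α → ℝ} {K B M : ℝ}
    (hk : Integrable k μ) (hk0 : ∀ a, 0 ≤ k a) (hK : ∫ a, k a ∂μ = K)
    (hf : AEStronglyMeasurable f μ) (hg : AEStronglyMeasurable g μ)
    (hfB : ∀ a, |f a| ≤ B) (hfg : ∀ a, |f a - g a| ≤ M) :
    |∫ a, k a * f a ∂μ - ∫ a, k a * g a ∂μ| ≤ K * M := by
  have hgB : ∀ a, |g a| ≤ B + M := fun a => by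
    linarith [abs_sub_abs_le_abs_sub (g a) (f a), abs_sub_comm (g a) (f a), hfB a, hfg a]
  rw [← integral_sub (hk.mul_bdd hf (ae_of_all _ hfB)) (hk.mul_bdd hg (ae_of_all _ hgB)), ← hK,
    ← integral_mul_const, ← Real.norm_eq_abs]
  refine norm_integral_le_of_norm_le (hk.mul_const M) (ae_of_all _ fun a => ?_)
  rw [← mul_sub, Real.norm_eq_abs, abs_mul, abs_of_nonneg (hk0 a)]
  exact mul_le_mul_of_nonneg_left (hfg a) (hk0 a)

lemma abs_integral_integral_mul_sub_le [SFinite μ] [SFinite ν] {k f g : α → β → ℝ} {K B M : ℝ}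
    (hk : Integrable (Function.uncurry k) (μ.prod ν)) (hk0 : ∀ a b, 0 ≤ k a b)
    (hK : ∫ p, k p.1 p.2 ∂μ.prod ν = K)
    (hf : AEStronglyMeasurable (Function.uncurry f) (μ.prod ν))
    (hg : AEStronglyMeasurable (Function.uncurry g) (μ.prod ν))
    (hfB : ∀ a b, |f a b| ≤ B) (hfg : ∀ a b, |f a b - g a b| ≤ M) :
    |∫ a, ∫ b, k a b * f a b ∂ν ∂μ - ∫ a, ∫ b, k a b * g a b ∂ν ∂μ| ≤ K * M := by
  have hgB : ∀ p : α × β, |g p.1 p.2| ≤ B + M := fun p => by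
    linarith [abs_sub_abs_le_abs_sub (g p.1 p.2) (f p.1 p.2), abs_sub_comm (g p.1 p.2) (f p.1 p.2),
      hfB p.1 p.2, hfg p.1 p.2]
  rw [integral_integral (f := fun a b => k a b * f a b)
      (hk.mul_bdd hf (ae_of_all _ fun p => hfB p.1 p.2)),
    integral_integral (f := fun a b => k a b * g a b) (hk.mul_bdd hg (ae_of_all _ hgB))]
  exact abs_integral_mul_sub_integral_mul_le hk (fun p => hk0 p.1 p.2) hK hf hg
    (fun p => hfB p.1 p.2) (fun p => hfg p.1 p.2)

end Integral

section Linf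

variable {d : ℕ}

lemma linf_nonneg (f : Rd d → ℝ) : 0 ≤ linf f := Real.iSup_nonneg fun _ => abs_nonneg _

lemma linf_le {f : Rd d → ℝ} {M : ℝ} (h : ∀ x, |f x| ≤ M) : linf f ≤ M := ciSup_le h

lemma abs_le_linf {f : Rd d → ℝ} (hf : ∃ M, ∀ x, |f x| ≤ M) (x : Rd d) : |f x| ≤ linf f := by
  obtain ⟨M, hM⟩ := hf
  exact le_ciSup ⟨M, by rintro - ⟨y, rfl⟩; exact hM y⟩ x

lemma exists_abs_sub_le {f g : Rd d → ℝ} (hf : ∃ M, ∀ x, |f x| ≤ M) (hg : ∃ M, ∀ x, |g x| ≤ M) :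
    ∃ M, ∀ x, |f x - g x| ≤ M := by
  obtain ⟨Mf, hMf⟩ := hf
  obtain ⟨Mg, hMg⟩ := hg
  exact ⟨Mf + Mg, fun x => (abs_sub _ _).trans (add_le_add (hMf x) (hMg x))⟩

lemma abs_linf_sub_linf_le {f g : Rd d → ℝ} {N : ℝ} (hf : ∃ M, ∀ x, |f x| ≤ M)
    (hg : ∃ M, ∀ x, |g x| ≤ M) (hfg : ∀ x, |f x - g x| ≤ N) : |linf f - linf g| ≤ N := by
  rw [abs_sub_le_iff, sub_le_iff_le_add, sub_le_iff_le_add]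
  constructor <;> refine linf_le fun x => ?_
  · linarith [abs_sub_abs_le_abs_sub (f x) (g x), hfg x, abs_le_linf hg x]
  · linarith [abs_sub_abs_le_abs_sub (g x) (f x), abs_sub_comm (g x) (f x), hfg x, abs_le_linf hf x]

end Linf

section Curves

variable {d : ℕ} {S : Set ℝ} {ρ ψ : ℝ → Rd d → ℝ}

lemma LinfContOn.continuousOn_comp (hρ : LinfContOn S ρ) (hbdd : ∀ t ∈ S, ∃ M, ∀ x, |ρ t x| ≤ M)
    {G : (Rd d → ℝ) → ℝ} {K : ℝ}
    (hG : ∀ s ∈ S, ∀ t ∈ S, ∀ N, (∀ x, |ρ s x - ρ t x| ≤ N) → |G (ρ s) - G (ρ t)| ≤ K * N) :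
    ContinuousOn (fun t => G (ρ t)) S := by
  refine Metric.continuousOn_iff.2 fun t ht ε hε => ?_
  obtain ⟨δ, hδ, hδε⟩ := hρ t ht (ε / (|K| + 1)) (by positivity)
  refine ⟨δ, hδ, fun s hs hst => ?_⟩
  rw [Real.dist_eq] at hst ⊢
  calc |G (ρ s) - G (ρ t)| ≤ K * linf (fun x => ρ s x - ρ t x) :=
        hG s hs t ht _ (abs_le_linf (exists_abs_sub_le (hbdd s hs) (hbdd t ht)))
    _ ≤ |K| * (ε / (|K| + 1)) := mul_le_mul (le_abs_self K) (hδε s hs hst).le (linf_nonneg _)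
        (abs_nonneg K)
    _ < (|K| + 1) * (ε / (|K| + 1)) := by gcongr; linarith
    _ = ε := mul_div_cancel₀ ε (by positivity)

lemma LinfContOn.sub (hρ : LinfContOn S ρ) (hψ : LinfContOn S ψ)
    (hρb : ∀ t ∈ S, ∃ M, ∀ x, |ρ t x| ≤ M) (hψb : ∀ t ∈ S, ∃ M, ∀ x, |ψ t x| ≤ M) :
    LinfContOn S (fun t x => ρ t x - ψ t x) := by
  intro t ht ε hε
  obtain ⟨δ₁, hδ₁, h₁⟩ := hρ t ht (ε / 2) (half_pos hε)
  obtain ⟨δ₂, hδ₂, h₂⟩ := hψ t ht (ε / 2) (half_pos hε)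
  refine ⟨min δ₁ δ₂, lt_min hδ₁ hδ₂, fun s hs hst => ?_⟩
  have hρst := h₁ s hs (hst.trans_le (min_le_left _ _))
  have hψst := h₂ s hs (hst.trans_le (min_le_right _ _))
  refine (linf_le fun x => ?_).trans_lt (add_lt_of_lt_sub_left (by linarith) :
    linf (fun x => ρ s x - ρ t x) + linf (fun x => ψ s x - ψ t x) < ε)
  calc |ρ s x - ψ s x - (ρ t x - ψ t x)| = |(ρ s x - ρ t x) - (ψ s x - ψ t x)| := by ring_nf
    _ ≤ |ρ s x - ρ t x| + |ψ s x - ψ t x| := abs_sub _ _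
    _ ≤ _ := add_le_add (abs_le_linf (exists_abs_sub_le (hρb s hs) (hρb t ht)) x)
        (abs_le_linf (exists_abs_sub_le (hψb s hs) (hψb t ht)) x)

end Curves

section WeightedNorm

variable {d : ℕ} {T γ C2 r : ℝ} {ρ ψ : ℝ → Rd d → ℝ}

lemma normTg_nonneg : 0 ≤ normTg T γ C2 ρ :=
  Real.iSup_nonneg fun _ => mul_nonneg (Real.exp_nonneg _) (linf_nonneg _)

lemma normTg_le {M : ℝ} (hγ : 0 ≤ γ * C2) (hM : 0 ≤ M)
    (h : ∀ t ∈ Icc (0:ℝ) T, ∀ x, |ρ t x| ≤ M) : normTg T γ C2 ρ ≤ M := by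
  refine Real.iSup_le (fun t => ?_) hM
  have hexp : Real.exp (-(γ * C2 * t.1)) ≤ 1 :=
    Real.exp_le_one_iff.2 (neg_nonpos.2 (mul_nonneg hγ t.2.1))
  calc Real.exp (-(γ * C2 * t.1)) * linf (ρ t.1) ≤ 1 * linf (ρ t.1) :=
        mul_le_mul_of_nonneg_right hexp (linf_nonneg _)
    _ ≤ M := (one_mul _).trans_le (linf_le (h t t.2))

lemma abs_le_exp_mul_normTg (hρ : LinfContOn (Icc 0 T) ρ)
    (hbdd : ∀ t ∈ Icc (0:ℝ) T, ∃ M, ∀ x, |ρ t x| ≤ M) (hγ : 0 ≤ γ * C2) {t : ℝ}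
    (ht : t ∈ Icc 0 T) (x : Rd d) : |ρ t x| ≤ Real.exp (γ * C2 * T) * normTg T γ C2 ρ := by
  have hlinf : ContinuousOn (fun s => linf (ρ s)) (Icc 0 T) :=
    hρ.continuousOn_comp hbdd (K := 1) fun s hs s' hs' N hN => by
      rw [one_mul]; exact abs_linf_sub_linf_le (hbdd s hs) (hbdd s' hs') hN
  -- Without this bound `normTg` would be the junk value `0` of an unbounded `⨆`.
  have hbddAbove : BddAbove (range fun s : Icc (0:ℝ) T =>
      Real.exp (-(γ * C2 * s)) * linf (ρ s)) := by
    have := isCompact_Icc.bddAbove_image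
      ((by fun_prop : Continuous fun s => Real.exp (-(γ * C2 * s))).continuousOn.mul hlinf)
    rwa [image_eq_range] at this
  calc |ρ t x| ≤ linf (ρ t) := abs_le_linf (hbdd t ht) x
    _ = Real.exp (γ * C2 * t) * (Real.exp (-(γ * C2 * t)) * linf (ρ t)) := by
        rw [← mul_assoc, ← Real.exp_add, add_neg_cancel, Real.exp_zero, one_mul]
    _ ≤ Real.exp (γ * C2 * T) * normTg T γ C2 ρ :=
        mul_le_mul (Real.exp_le_exp.2 (mul_le_mul_of_nonneg_left ht.2 hγ))
          (le_ciSup hbddAbove ⟨t, ht⟩)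
          (mul_nonneg (Real.exp_nonneg _) (linf_nonneg _)) (Real.exp_nonneg _)

lemma memB.mem_Icc (hρ : memB T γ C2 r ρ) (hγ : 0 ≤ γ * C2) {t : ℝ} (ht : t ∈ Icc 0 T)
    (x : Rd d) : ρ t x ∈ Icc 0 (Real.exp (γ * C2 * T) * r) := by
  refine ⟨hρ.2.2.1 t ht x, (le_abs_self _).trans ?_⟩
  exact (abs_le_exp_mul_normTg hρ.1 (fun s hs => (hρ.2.1 s hs).2) hγ ht x).trans
    (mul_le_mul_of_nonneg_left hρ.2.2.2 (Real.exp_nonneg _))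

lemma memB.abs_sub_le (hρ : memB T γ C2 r ρ) (hψ : memB T γ C2 r ψ) (hγ : 0 ≤ γ * C2) {t : ℝ}
    (ht : t ∈ Icc 0 T) (x : Rd d) :
    |ρ t x - ψ t x| ≤ Real.exp (γ * C2 * T) * normTg T γ C2 (fun t x => ρ t x - ψ t x) :=
  abs_le_exp_mul_normTg (hρ.1.sub hψ.1 (fun s hs => (hρ.2.1 s hs).2) fun s hs => (hψ.2.1 s hs).2)
    (fun s hs => exists_abs_sub_le (hρ.2.1 s hs).2 (hψ.2.1 s hs).2) hγ ht x

end WeightedNorm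

section Kernels

variable {d : ℕ}

structure ConstMarginals₃ (c : Rd d → Rd d → Rd d → ℝ) (K : ℝ) : Prop where
  nonneg : ∀ x y z, 0 ≤ c x y z
  integrable₁₂ : ∀ z, Integrable fun p : Rd d × Rd d => c p.1 p.2 z
  integrable₁₃ : ∀ y, Integrable fun p : Rd d × Rd d => c p.1 y p.2
  integrable₂₃ : ∀ x, Integrable fun p : Rd d × Rd d => c x p.1 p.2
  integral₁₂ : ∀ z, ∫ p : Rd d × Rd d, c p.1 p.2 z = K
  integral₁₃ : ∀ y, ∫ p : Rd d × Rd d, c p.1 y p.2 = K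
  integral₂₃ : ∀ x, ∫ p : Rd d × Rd d, c x p.1 p.2 = K

structure ConstMarginals₂ (c : Rd d → Rd d → ℝ) (K : ℝ) : Prop where
  nonneg : ∀ x y, 0 ≤ c x y
  integrable₁ : ∀ y, Integrable fun x => c x y
  integrable₂ : ∀ x, Integrable fun y => c x y
  integral₁ : ∀ y, ∫ x, c x y = K
  integral₂ : ∀ x, ∫ y, c x y = K

structure IsDensity (φ : Rd d → ℝ) (Φ : ℝ) : Prop where
  measurable : Measurable φ
  nonneg : ∀ u, 0 ≤ φ u
  integrable : Integrable φ
  integral_eq : ∫ u, φ u = Φ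

variable {c₁ : Rd d → Rd d → Rd d → ℝ} {c₂ : Rd d → Rd d → ℝ} {φ : Rd d → ℝ} {C1 C2 Φ : ℝ}

lemma ConstMarginals₃.const_nonneg (hc : ConstMarginals₃ c₁ C1) : 0 ≤ C1 :=
  hc.integral₂₃ 0 ▸ integral_nonneg fun _ => hc.nonneg _ _ _

lemma ConstMarginals₂.const_nonneg (hc : ConstMarginals₂ c₂ C2) : 0 ≤ C2 :=
  hc.integral₂ 0 ▸ integral_nonneg fun _ => hc.nonneg _ _

lemma IsDensity.const_nonneg (hφ : IsDensity φ Φ) : 0 ≤ Φ :=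
  hφ.integral_eq ▸ integral_nonneg hφ.nonneg

lemma ConstMarginals₃.integrable_sym (hc : ConstMarginals₃ c₁ C1) (x : Rd d) :
    Integrable fun p : Rd d × Rd d => c₁ x p.1 p.2 + c₁ p.1 x p.2 :=
  (hc.integrable₂₃ x).add (hc.integrable₁₃ x)

lemma ConstMarginals₃.integral_sym (hc : ConstMarginals₃ c₁ C1) (x : Rd d) :
    ∫ p : Rd d × Rd d, (c₁ x p.1 p.2 + c₁ p.1 x p.2) = 2 * C1 := by
  rw [integral_add (hc.integrable₂₃ x) (hc.integrable₁₃ x), hc.integral₂₃, hc.integral₁₃, two_mul]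

lemma abs_hker_sub_le (hc₁ : ConstMarginals₃ c₁ C1) {ρ ψ : Rd d → ℝ} {R N : ℝ}
    (hρm : Measurable ρ) (hψm : Measurable ψ) (hρ : ∀ y, |ρ y| ≤ R) (hN : ∀ y, |ρ y - ψ y| ≤ N)
    (x : Rd d) : |hker c₁ C2 ρ x - hker c₁ C2 ψ x| ≤ C1 * N := by
  have h := abs_integral_integral_mul_sub_le (μ := volume) (ν := volume)
    (k := fun y z => c₁ x y z + c₁ y x z) (f := fun y _ => ρ y) (g := fun y _ => ψ y)
    (hc₁.integrable_sym x) (fun _ _ => add_nonneg (hc₁.nonneg _ _ _) (hc₁.nonneg _ _ _))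
    (hc₁.integral_sym x) (hρm.comp measurable_fst).aestronglyMeasurable
    (hψm.comp measurable_fst).aestronglyMeasurable (fun y _ => hρ y) (fun y _ => hN y)
  simp only [hker]
  rw [abs_le] at h ⊢
  constructor <;> linarith [h.1, h.2]

lemma hker_nonneg (hc₁ : ConstMarginals₃ c₁ C1) (hC2 : 0 ≤ C2) {ρ : Rd d → ℝ}
    (hρ : ∀ y, 0 ≤ ρ y) (x : Rd d) : 0 ≤ hker c₁ C2 ρ x := by
  have h : 0 ≤ ∫ y, ∫ z, (c₁ x y z + c₁ y x z) * ρ y := integral_nonneg fun y =>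
    integral_nonneg fun z => mul_nonneg (add_nonneg (hc₁.nonneg x y z) (hc₁.nonneg y x z)) (hρ y)
  unfold hker
  linarith

lemma abs_exp_neg_integral_le_one {ρ : Rd d → ℝ} (hφ : ∀ u, 0 ≤ φ u) (hρ : ∀ u, 0 ≤ ρ u)
    (z : Rd d) :
    |Real.exp (-∫ u, φ (z - u) * ρ u)| ≤ 1 ∧ |1 - Real.exp (-∫ u, φ (z - u) * ρ u)| ≤ 1 := by
  have hint : 0 ≤ ∫ u, φ (z - u) * ρ u := integral_nonneg fun u => mul_nonneg (hφ (z - u)) (hρ u)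
  have h1 := Real.exp_le_one_iff.2 (neg_nonpos.2 hint)
  have h0 := Real.exp_pos (-∫ u, φ (z - u) * ρ u)
  rw [abs_le, abs_le]
  exact ⟨⟨by linarith, h1⟩, ⟨by linarith, by linarith⟩⟩

lemma abs_exp_neg_integral_sub_le (hφ : IsDensity φ Φ) {ρ ψ : Rd d → ℝ} {R N : ℝ}
    (hρm : Measurable ρ) (hψm : Measurable ψ) (hρ : ∀ u, ρ u ∈ Icc 0 R) (hψ : ∀ u, 0 ≤ ψ u)
    (hN : ∀ u, |ρ u - ψ u| ≤ N) (z : Rd d) :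
    |Real.exp (-∫ u, φ (z - u) * ρ u) - Real.exp (-∫ u, φ (z - u) * ψ u)| ≤ Φ * N :=
  (abs_exp_neg_sub_exp_neg_le (integral_nonneg fun u => mul_nonneg (hφ.nonneg _) (hρ u).1)
    (integral_nonneg fun u => mul_nonneg (hφ.nonneg _) (hψ u))).trans
    (abs_integral_mul_sub_integral_mul_le (hφ.integrable.comp_sub_left z) (fun _ => hφ.nonneg _)
      ((integral_sub_left_eq_self φ volume z).trans hφ.integral_eq) hρm.aestronglyMeasurable
      hψm.aestronglyMeasurable (fun u => (abs_of_nonneg (hρ u).1).trans_le (hρ u).2) hN)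

lemma measurable_exp_neg_integral {ρ : Rd d → ℝ} (hφ : Measurable φ) (hρ : Measurable ρ) :
    Measurable fun z => Real.exp (-∫ u, φ (z - u) * ρ u) :=
  Real.measurable_exp.comp ((hφ.comp (measurable_fst.sub measurable_snd)).mul
    (hρ.comp measurable_snd)).stronglyMeasurable.integral_prod_right'.measurable.neg

end Kernels

section Gain

variable {d : ℕ} {c₁ : Rd d → Rd d → Rd d → ℝ} {c₂ : Rd d → Rd d → ℝ} {φ₁ φ₂ : Rd d → ℝ}
  {C1 C2 Φ₁ Φ₂ R : ℝ}

def lipR2 (C1 C2 Φ₁ Φ₂ R : ℝ) : ℝ := 3 / 2 * C1 * (Φ₁ * R ^ 2 + 2 * R) + 2 * C2 * (Φ₂ * R + 1)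

lemma lipR2_nonneg (hC1 : 0 ≤ C1) (hC2 : 0 ≤ C2) (hΦ₁ : 0 ≤ Φ₁) (hΦ₂ : 0 ≤ Φ₂) (hR : 0 ≤ R) :
    0 ≤ lipR2 C1 C2 Φ₁ Φ₂ R := by
  unfold lipR2; positivity

lemma abs_R2_sub_le (hc₁ : ConstMarginals₃ c₁ C1) (hc₂ : ConstMarginals₂ c₂ C2)
    (hφ₁ : IsDensity φ₁ Φ₁) (hφ₂ : IsDensity φ₂ Φ₂) {ρ ψ : Rd d → ℝ} {N : ℝ}
    (hρm : Measurable ρ) (hψm : Measurable ψ) (hρ : ∀ y, ρ y ∈ Icc 0 R)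
    (hψ : ∀ y, ψ y ∈ Icc 0 R) (hN : ∀ y, |ρ y - ψ y| ≤ N) (x : Rd d) :
    |R2 c₁ c₂ φ₁ φ₂ ρ x - R2 c₁ c₂ φ₁ φ₂ ψ x| ≤ lipR2 C1 C2 Φ₁ Φ₂ R * N := by
  have hρR : ∀ y, |ρ y| ≤ R := fun y => (abs_of_nonneg (hρ y).1).trans_le (hρ y).2
  have hψR : ∀ y, |ψ y| ≤ R := fun y => (abs_of_nonneg (hψ y).1).trans_le (hψ y).2
  have hE₁ := abs_exp_neg_integral_le_one hφ₁.nonneg fun u => (hρ u).1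
  have hE₂ := abs_exp_neg_integral_le_one hφ₂.nonneg fun u => (hρ u).1
  have hdE₁ := abs_exp_neg_integral_sub_le hφ₁ hρm hψm hρ (fun u => (hψ u).1) hN
  have hdE₂ := abs_exp_neg_integral_sub_le hφ₂ hρm hψm hρ (fun u => (hψ u).1) hN
  simp only [R2, mul_assoc]
  calc _ ≤ _ := abs_half_add_half_add_add_sub_le ..
    _ ≤ 1 / 2 * (C1 * (Φ₁ * N * (R * R) + 1 * (N * R + R * N)))
        + 1 / 2 * (2 * C1 * (Φ₁ * N * (R * R) + 1 * (N * R + R * N)))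
        + C2 * (Φ₂ * N * R + 1 * N) + C2 * (Φ₂ * N * R + 1 * N) := by
      gcongr 1 / 2 * ?_ + 1 / 2 * ?_ + ?_ + ?_
      · exact abs_integral_integral_mul_sub_le (hc₁.integrable₁₂ x) (fun _ _ => hc₁.nonneg _ _ _)
          (hc₁.integral₁₂ x) (by fun_prop) (by fun_prop)
          (fun y z => abs_mul_le_of_abs_le (hE₁ x).1 (abs_mul_le_of_abs_le (hρR y) (hρR z)))
          (fun y z => abs_mul_sub_mul_le (hE₁ x).1 (abs_mul_le_of_abs_le (hψR y) (hψR z)) (hdE₁ x)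
            (abs_mul_sub_mul_le (hρR y) (hψR z) (hN y) (hN z)))
      · exact abs_integral_integral_mul_sub_le (hc₁.integrable_sym x)
          (fun _ _ => add_nonneg (hc₁.nonneg _ _ _) (hc₁.nonneg _ _ _)) (hc₁.integral_sym x)
          ((((measurable_exp_neg_integral hφ₁.measurable hρm).comp measurable_snd).const_sub 1).mul
            (by fun_prop)).aestronglyMeasurable
          ((((measurable_exp_neg_integral hφ₁.measurable hψm).comp measurable_snd).const_sub 1).mul
            (by fun_prop)).aestronglyMeasurable
          (fun y z => abs_mul_le_of_abs_le (hE₁ z).2 (abs_mul_le_of_abs_le (hρR x) (hρR y)))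
          (fun y z => abs_mul_sub_mul_le (hE₁ z).2 (abs_mul_le_of_abs_le (hψR x) (hψR y))
            (by rw [sub_sub_sub_cancel_left, abs_sub_comm]; exact hdE₁ z)
            (abs_mul_sub_mul_le (hρR x) (hψR y) (hN x) (hN y)))
      · exact abs_integral_mul_sub_integral_mul_le (hc₂.integrable₁ x) (fun _ => hc₂.nonneg _ _)
          (hc₂.integral₁ x) (by fun_prop) (by fun_prop)
          (fun y => abs_mul_le_of_abs_le (hE₂ x).1 (hρR y))
          (fun y => abs_mul_sub_mul_le (hE₂ x).1 (hψR y) (hdE₂ x) (hN y))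
      · exact abs_integral_mul_sub_integral_mul_le (hc₂.integrable₂ x) (fun _ => hc₂.nonneg _ _)
          (hc₂.integral₂ x) (((measurable_exp_neg_integral hφ₂.measurable hρm).const_sub 1).mul
            measurable_const).aestronglyMeasurable
          (((measurable_exp_neg_integral hφ₂.measurable hψm).const_sub 1).mul
            measurable_const).aestronglyMeasurable
          (fun y => abs_mul_le_of_abs_le (hE₂ y).2 (hρR x))
          (fun y => abs_mul_sub_mul_le (hE₂ y).2 (hψR x)
            (by rw [sub_sub_sub_cancel_left, abs_sub_comm]; exact hdE₂ y) (hN x))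
    _ = lipR2 C1 C2 Φ₁ Φ₂ R * N := by unfold lipR2; ring

lemma abs_R2_le (hc₁ : ConstMarginals₃ c₁ C1) (hc₂ : ConstMarginals₂ c₂ C2)
    (hφ₁ : IsDensity φ₁ Φ₁) (hφ₂ : IsDensity φ₂ Φ₂) {ρ : Rd d → ℝ} (hρm : Measurable ρ)
    (hρ : ∀ y, ρ y ∈ Icc 0 R) (x : Rd d) :
    |R2 c₁ c₂ φ₁ φ₂ ρ x| ≤ lipR2 C1 C2 Φ₁ Φ₂ R * R := by
  have hR : 0 ≤ R := (hρ 0).1.trans (hρ 0).2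
  have h0 : R2 c₁ c₂ φ₁ φ₂ (fun _ => 0) x = 0 := by simp [R2]
  have h := abs_R2_sub_le hc₁ hc₂ hφ₁ hφ₂ hρm measurable_const hρ (fun _ => ⟨le_rfl, hR⟩)
    (fun y => by rw [sub_zero, abs_of_nonneg (hρ y).1]; exact (hρ y).2) x
  rwa [h0, sub_zero] at h

lemma LinfContOn.continuousOn_hker (hc₁ : ConstMarginals₃ c₁ C1) {S : Set ℝ}
    {ρ : ℝ → Rd d → ℝ} (hρ : LinfContOn S ρ) (hm : ∀ t ∈ S, Measurable (ρ t))
    (hR : ∀ t ∈ S, ∀ y, |ρ t y| ≤ R) (x : Rd d) :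
    ContinuousOn (fun t => hker c₁ C2 (ρ t) x) S :=
  hρ.continuousOn_comp (G := fun f => hker c₁ C2 f x) (fun t ht => ⟨R, hR t ht⟩)
    fun s hs t ht _ hN => abs_hker_sub_le hc₁ (hm s hs) (hm t ht) (hR s hs) hN x

lemma LinfContOn.continuousOn_R2 (hc₁ : ConstMarginals₃ c₁ C1) (hc₂ : ConstMarginals₂ c₂ C2)
    (hφ₁ : IsDensity φ₁ Φ₁) (hφ₂ : IsDensity φ₂ Φ₂) {S : Set ℝ} {ρ : ℝ → Rd d → ℝ}
    (hρ : LinfContOn S ρ) (hm : ∀ t ∈ S, Measurable (ρ t)) (hR : ∀ t ∈ S, ∀ y, ρ t y ∈ Icc 0 R)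
    (x : Rd d) : ContinuousOn (fun t => R2 c₁ c₂ φ₁ φ₂ (ρ t) x) S :=
  hρ.continuousOn_comp (G := fun f => R2 c₁ c₂ φ₁ φ₂ f x)
    (fun t ht => ⟨R, fun y => (abs_of_nonneg (hR t ht y).1).trans_le (hR t ht y).2⟩)
    fun s hs t ht _ hN =>
      abs_R2_sub_le hc₁ hc₂ hφ₁ hφ₂ (hm s hs) (hm t ht) (hR s hs) (hR t ht) hN x

end Gain

section Duhamel

variable {h h' g g' : ℝ → ℝ} {t L : ℝ}

lemma abs_exp_neg_integral_sub_exp_neg_integral_le {s : ℝ} (hst : s ≤ t)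
    (hh : IntervalIntegrable h volume s t) (hh' : IntervalIntegrable h' volume s t)
    (h0 : ∀ σ ∈ Icc s t, 0 ≤ h σ) (h0' : ∀ σ ∈ Icc s t, 0 ≤ h' σ)
    (hL : ∀ σ ∈ Icc s t, |h σ - h' σ| ≤ L) :
    |Real.exp (-∫ σ in s..t, h σ) - Real.exp (-∫ σ in s..t, h' σ)| ≤ (t - s) * L := by
  refine (abs_exp_neg_sub_exp_neg_le (intervalIntegral.integral_nonneg hst h0)
    (intervalIntegral.integral_nonneg hst h0')).trans ?_
  rw [← intervalIntegral.integral_sub hh hh', ← Real.norm_eq_abs]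
  calc ‖∫ σ in s..t, (h σ - h' σ)‖ ≤ L * |t - s| :=
        intervalIntegral.norm_integral_le_of_norm_le_const fun σ hσ =>
          hL σ (Ioc_subset_Icc_self (by rwa [uIoc_of_le hst] at hσ))
    _ = (t - s) * L := by rw [abs_of_nonneg (sub_nonneg.2 hst), mul_comm]

lemma intervalIntegrable_mul_exp_neg_integral (ht : 0 ≤ t) (hh : ContinuousOn h (Icc 0 t))
    (hg : ContinuousOn g (Icc 0 t)) :
    IntervalIntegrable (fun s => g s * Real.exp (-∫ σ in s..t, h σ)) volume 0 t := by
  have hprim := intervalIntegral.continuousOn_primitive_interval_left (μ := volume)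
    (by rw [uIcc_of_le ht]; exact hh.integrableOn_Icc)
  rw [uIcc_of_le ht] at hprim
  exact (hg.mul hprim.neg.rexp).intervalIntegrable_of_Icc ht

lemma abs_duhamel_sub_le {a A M B : ℝ} (ht : 0 ≤ t)
    (hh : ContinuousOn h (Icc 0 t)) (hh' : ContinuousOn h' (Icc 0 t))
    (hg : ContinuousOn g (Icc 0 t)) (hg' : ContinuousOn g' (Icc 0 t))
    (h0 : ∀ s ∈ Icc 0 t, 0 ≤ h s) (h0' : ∀ s ∈ Icc 0 t, 0 ≤ h' s)
    (hL : ∀ s ∈ Icc 0 t, |h s - h' s| ≤ L) (hM : ∀ s ∈ Icc 0 t, |g s - g' s| ≤ M)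
    (hB : ∀ s ∈ Icc 0 t, |g s| ≤ B) (ha : |a| ≤ A) :
    |(a * Real.exp (-∫ s in (0:ℝ)..t, h s)
        + ∫ s in (0:ℝ)..t, g s * Real.exp (-∫ σ in s..t, h σ))
      - (a * Real.exp (-∫ s in (0:ℝ)..t, h' s)
        + ∫ s in (0:ℝ)..t, g' s * Real.exp (-∫ σ in s..t, h' σ))|
      ≤ t * (A * L + M + B * (t * L)) := by
  have ht0 : (0:ℝ) ∈ Icc 0 t := ⟨le_rfl, ht⟩
  have hB0 : 0 ≤ B := (abs_nonneg _).trans (hB 0 ht0)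
  have hL0 : 0 ≤ L := (abs_nonneg _).trans (hL 0 ht0)
  have hexp : ∀ s ∈ Icc 0 t, |Real.exp (-∫ σ in s..t, h σ) - Real.exp (-∫ σ in s..t, h' σ)|
      ≤ (t - s) * L := fun s hs =>
    abs_exp_neg_integral_sub_exp_neg_integral_le hs.2
      ((hh.mono (Icc_subset_Icc_left hs.1)).intervalIntegrable_of_Icc hs.2)
      ((hh'.mono (Icc_subset_Icc_left hs.1)).intervalIntegrable_of_Icc hs.2)
      (fun σ hσ => h0 σ (Icc_subset_Icc_left hs.1 hσ))
      (fun σ hσ => h0' σ (Icc_subset_Icc_left hs.1 hσ))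
      fun σ hσ => hL σ (Icc_subset_Icc_left hs.1 hσ)
  have hexp_le : ∀ s ∈ Icc 0 t, |Real.exp (-∫ σ in s..t, h' σ)| ≤ 1 := fun s hs => by
    rw [abs_of_pos (Real.exp_pos _), Real.exp_le_one_iff, neg_nonpos]
    exact intervalIntegral.integral_nonneg hs.2 fun σ hσ => h0' σ (Icc_subset_Icc_left hs.1 hσ)
  have hsource : |(∫ s in (0:ℝ)..t, g s * Real.exp (-∫ σ in s..t, h σ))
      - ∫ s in (0:ℝ)..t, g' s * Real.exp (-∫ σ in s..t, h' σ)| ≤ (M + B * (t * L)) * t := by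
    rw [← intervalIntegral.integral_sub (intervalIntegrable_mul_exp_neg_integral ht hh hg)
      (intervalIntegrable_mul_exp_neg_integral ht hh' hg'), ← Real.norm_eq_abs]
    refine (intervalIntegral.norm_integral_le_of_norm_le_const fun s hs => ?_).trans_eq
      (by rw [sub_zero, abs_of_nonneg ht])
    rw [uIoc_of_le ht] at hs
    have hs' := Ioc_subset_Icc_self hs
    refine (abs_mul_sub_mul_le (hB s hs') (hexp_le s hs') (hM s hs') (hexp s hs')).trans ?_
    linarith [mul_nonneg (mul_nonneg hB0 hL0) hs'.1]
  have hinit : |a * Real.exp (-∫ s in (0:ℝ)..t, h s) - a * Real.exp (-∫ s in (0:ℝ)..t, h' s)|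
      ≤ A * (t * L) := by
    rw [← mul_sub, abs_mul]
    simpa using mul_le_mul ha (hexp 0 ht0) (abs_nonneg _) ((abs_nonneg a).trans ha)
  rw [abs_le] at hsource hinit ⊢
  constructor <;> linarith

end Duhamel

section Contraction

variable {d : ℕ} {c₁ : Rd d → Rd d → Rd d → ℝ} {c₂ : Rd d → Rd d → ℝ} {φ₁ φ₂ ρ₀ : Rd d → ℝ}
  {C1 C2 Φ₁ Φ₂ : ℝ}

lemma abs_Fmap_sub_le (hc₁ : ConstMarginals₃ c₁ C1) (hc₂ : ConstMarginals₂ c₂ C2)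
    (hφ₁ : IsDensity φ₁ Φ₁) (hφ₂ : IsDensity φ₂ Φ₂) {T R N A t : ℝ} {ρ ψ : ℝ → Rd d → ℝ}
    (hρ : LinfContOn (Icc 0 T) ρ) (hψ : LinfContOn (Icc 0 T) ψ)
    (hρm : ∀ s ∈ Icc (0:ℝ) T, Measurable (ρ s)) (hψm : ∀ s ∈ Icc (0:ℝ) T, Measurable (ψ s))
    (hρR : ∀ s ∈ Icc (0:ℝ) T, ∀ y, ρ s y ∈ Icc 0 R) (hψR : ∀ s ∈ Icc (0:ℝ) T, ∀ y, ψ s y ∈ Icc 0 R)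
    (hN : ∀ s ∈ Icc (0:ℝ) T, ∀ y, |ρ s y - ψ s y| ≤ N) (ht : t ∈ Icc 0 T) {x : Rd d}
    (hρ₀ : |ρ₀ x| ≤ A) :
    |Fmap c₁ c₂ φ₁ φ₂ C2 ρ₀ ρ t x - Fmap c₁ c₂ φ₁ φ₂ C2 ρ₀ ψ t x|
      ≤ t * (A * (C1 * N) + lipR2 C1 C2 Φ₁ Φ₂ R * N
        + lipR2 C1 C2 Φ₁ Φ₂ R * R * (t * (C1 * N))) := by
  have hsub : Icc 0 t ⊆ Icc 0 T := Icc_subset_Icc_right ht.2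
  have habs : ∀ {f : ℝ → Rd d → ℝ}, (∀ s ∈ Icc (0:ℝ) T, ∀ y, f s y ∈ Icc 0 R) →
      ∀ s ∈ Icc (0:ℝ) T, ∀ y, |f s y| ≤ R := fun hf s hs y =>
    (abs_of_nonneg (hf s hs y).1).trans_le (hf s hs y).2
  exact abs_duhamel_sub_le ht.1
    ((hρ.continuousOn_hker hc₁ hρm (habs hρR) x).mono hsub)
    ((hψ.continuousOn_hker hc₁ hψm (habs hψR) x).mono hsub)
    ((hρ.continuousOn_R2 hc₁ hc₂ hφ₁ hφ₂ hρm hρR x).mono hsub)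
    ((hψ.continuousOn_R2 hc₁ hc₂ hφ₁ hφ₂ hψm hψR x).mono hsub)
    (fun s hs => hker_nonneg hc₁ hc₂.const_nonneg (fun y => (hρR s (hsub hs) y).1) x)
    (fun s hs => hker_nonneg hc₁ hc₂.const_nonneg (fun y => (hψR s (hsub hs) y).1) x)
    (fun s hs => abs_hker_sub_le hc₁ (hρm s (hsub hs)) (hψm s (hsub hs)) (habs hρR s (hsub hs))
      (hN s (hsub hs)) x)
    (fun s hs => abs_R2_sub_le hc₁ hc₂ hφ₁ hφ₂ (hρm s (hsub hs)) (hψm s (hsub hs))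
      (hρR s (hsub hs)) (hψR s (hsub hs)) (hN s (hsub hs)) x)
    (fun s hs => abs_R2_le hc₁ hc₂ hφ₁ hφ₂ (hρm s (hsub hs)) (hρR s (hsub hs)) x) hρ₀

lemma exists_abs_Fmap_sub_le (hc₁ : ConstMarginals₃ c₁ C1) (hc₂ : ConstMarginals₂ c₂ C2)
    (hφ₁ : IsDensity φ₁ Φ₁) (hφ₂ : IsDensity φ₂ Φ₂) {r γ Tmax : ℝ} (hρ₀ : ∀ x, |ρ₀ x| ≤ r)
    (hγ : 0 ≤ γ) (hTmax : 0 ≤ Tmax) :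
    ∃ K, 0 ≤ K ∧ ∀ T ≤ Tmax, ∀ ρ ψ : ℝ → Rd d → ℝ, memB T γ C2 r ρ → memB T γ C2 r ψ →
      ∀ t ∈ Icc (0:ℝ) T, ∀ x, |Fmap c₁ c₂ φ₁ φ₂ C2 ρ₀ ρ t x - Fmap c₁ c₂ φ₁ φ₂ C2 ρ₀ ψ t x|
        ≤ K * t * normTg T γ C2 (fun t x => ρ t x - ψ t x) := by
  have hr : 0 ≤ r := (abs_nonneg _).trans (hρ₀ 0)
  have hC1 := hc₁.const_nonneg
  have hγC2 : 0 ≤ γ * C2 := mul_nonneg hγ hc₂.const_nonneg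
  set E := Real.exp (γ * C2 * Tmax)
  set L := lipR2 C1 C2 Φ₁ Φ₂ (E * r)
  have hL : 0 ≤ L := lipR2_nonneg hC1 hc₂.const_nonneg hφ₁.const_nonneg hφ₂.const_nonneg
    (by positivity)
  refine ⟨E * (r * C1 + L + L * (E * r) * (Tmax * C1)), by positivity,
    fun T hT ρ ψ hρ hψ t ht x => ?_⟩
  have hET : Real.exp (γ * C2 * T) ≤ E := Real.exp_le_exp.2 (mul_le_mul_of_nonneg_left hT hγC2)
  set N := normTg T γ C2 (fun t x => ρ t x - ψ t x)
  have hN : 0 ≤ N := normTg_nonneg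
  refine (abs_Fmap_sub_le hc₁ hc₂ hφ₁ hφ₂ (R := E * r) (N := E * N) hρ.1 hψ.1
    (fun s hs => (hρ.2.1 s hs).1) (fun s hs => (hψ.2.1 s hs).1)
    (fun s hs y => Icc_subset_Icc_right (mul_le_mul_of_nonneg_right hET hr) (hρ.mem_Icc hγC2 hs y))
    (fun s hs y => Icc_subset_Icc_right (mul_le_mul_of_nonneg_right hET hr) (hψ.mem_Icc hγC2 hs y))
    (fun s hs y => (hρ.abs_sub_le hψ hγC2 hs y).trans (mul_le_mul_of_nonneg_right hET hN))
    ht (hρ₀ x)).trans ?_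
  have hP : 0 ≤ t * E * N * L * (E * r) * C1 := by
    have := ht.1
    positivity
  linarith [mul_nonneg hP (sub_nonneg.2 (ht.2.trans hT))]

end Contraction

theorem statement2_general {d : ℕ}
    (c₁ : Rd d → Rd d → Rd d → ℝ) (C1 : ℝ)
    (hc₁nn : ∀ x y z, 0 ≤ c₁ x y z)
    (hc₁int₁₂ : ∀ z, Integrable fun p : Rd d × Rd d => c₁ p.1 p.2 z)
    (hc₁int₁₃ : ∀ y, Integrable fun p : Rd d × Rd d => c₁ p.1 y p.2)
    (hc₁int₂₃ : ∀ x, Integrable fun p : Rd d × Rd d => c₁ x p.1 p.2)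
    (hc₁val₁₂ : ∀ z, (∫ x, ∫ y, c₁ x y z) = C1)
    (hc₁val₁₃ : ∀ y, (∫ x, ∫ z, c₁ x y z) = C1)
    (hc₁val₂₃ : ∀ x, (∫ y, ∫ z, c₁ x y z) = C1)
    (c₂ : Rd d → Rd d → ℝ) (C2 : ℝ)
    (hc₂nn : ∀ x y, 0 ≤ c₂ x y)
    (hc₂int₁ : ∀ y, Integrable fun x => c₂ x y)
    (hc₂int₂ : ∀ x, Integrable fun y => c₂ x y)
    (hc₂val₁ : ∀ y, (∫ x, c₂ x y) = C2)
    (hc₂val₂ : ∀ x, (∫ y, c₂ x y) = C2)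
    (φ₁ : Rd d → ℝ) (Φ₁ : ℝ) (hφ₁meas : Measurable φ₁) (hφ₁nn : ∀ u, 0 ≤ φ₁ u)
    (hφ₁int : Integrable φ₁) (hφ₁val : (∫ u, φ₁ u) = Φ₁)
    (φ₂ : Rd d → ℝ) (Φ₂ : ℝ) (hφ₂meas : Measurable φ₂) (hφ₂nn : ∀ u, 0 ≤ φ₂ u)
    (hφ₂int : Integrable φ₂) (hφ₂val : (∫ u, φ₂ u) = Φ₂)
    (ρ₀ : Rd d → ℝ) (hρ₀mem : MemLinf ρ₀)
    (r : ℝ) (hr : linf ρ₀ ≤ r)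
    (γ Tmax : ℝ) (hγ : 0 < γ) (hTmax : 0 < Tmax) :
    ∃ T' : ℝ, 0 < T' ∧ T' ≤ Tmax ∧ ∃ C : ℝ, C < 1 ∧
      ∀ ρ ψ : ℝ → Rd d → ℝ, memB T' γ C2 r ρ → memB T' γ C2 r ψ →
        ρ 0 = ρ₀ → ψ 0 = ρ₀ →
        normTg T' γ C2
            (fun t x => Fmap c₁ c₂ φ₁ φ₂ C2 ρ₀ ρ t x - Fmap c₁ c₂ φ₁ φ₂ C2 ρ₀ ψ t x)
          ≤ C * normTg T' γ C2 (fun t x => ρ t x - ψ t x) := by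
  have hc₁ : ConstMarginals₃ c₁ C1 := ⟨hc₁nn, hc₁int₁₂, hc₁int₁₃, hc₁int₂₃,
    fun z => (integral_prod _ (hc₁int₁₂ z)).trans (hc₁val₁₂ z),
    fun y => (integral_prod _ (hc₁int₁₃ y)).trans (hc₁val₁₃ y),
    fun x => (integral_prod _ (hc₁int₂₃ x)).trans (hc₁val₂₃ x)⟩
  have hc₂ : ConstMarginals₂ c₂ C2 := ⟨hc₂nn, hc₂int₁, hc₂int₂, hc₂val₁, hc₂val₂⟩
  obtain ⟨K, hK, hFK⟩ := exists_abs_Fmap_sub_le hc₁ hc₂ ⟨hφ₁meas, hφ₁nn, hφ₁int, hφ₁val⟩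
    ⟨hφ₂meas, hφ₂nn, hφ₂int, hφ₂val⟩ (fun x => (abs_le_linf hρ₀mem.2 x).trans hr) hγ.le hTmax.le
  set T' := min Tmax (1 / (2 * (K + 1)))
  have hKT' : K * T' ≤ 1 / 2 :=
    calc K * T' ≤ K * (1 / (2 * (K + 1))) := mul_le_mul_of_nonneg_left (min_le_right _ _) hK
      _ ≤ 1 / 2 := by rw [mul_one_div, div_le_iff₀ (by positivity)]; linarith
  refine ⟨T', lt_min hTmax (by positivity), min_le_left _ _, 1 / 2, by norm_num,
    fun ρ ψ hρ hψ _ _ => ?_⟩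
  have hN : 0 ≤ normTg T' γ C2 (fun t x => ρ t x - ψ t x) := normTg_nonneg
  refine normTg_le (mul_nonneg hγ.le hc₂.const_nonneg) (by positivity) fun t ht x =>
    (hFK T' (min_le_left _ _) ρ ψ hρ hψ t ht x).trans ?_
  calc K * t * _ ≤ K * T' * _ := by gcongr; exact ht.2
    _ ≤ 1 / 2 * _ := by gcongr

theorem statement2 {d : ℕ} (hd : 1 ≤ d)
    (c₁ : Rd d → Rd d → Rd d → ℝ) (C1 : ℝ)
    (hc₁meas : Measurable fun p : Rd d × Rd d × Rd d => c₁ p.1 p.2.1 p.2.2)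
    (hc₁nn : ∀ x y z, 0 ≤ c₁ x y z)
    (hc₁sym : ∀ x y z, c₁ x y z = c₁ y x z)
    (hc₁int₁₂ : ∀ z, Integrable fun p : Rd d × Rd d => c₁ p.1 p.2 z)
    (hc₁int₁₃ : ∀ y, Integrable fun p : Rd d × Rd d => c₁ p.1 y p.2)
    (hc₁int₂₃ : ∀ x, Integrable fun p : Rd d × Rd d => c₁ x p.1 p.2)
    (hc₁val₁₂ : ∀ z, (∫ x, ∫ y, c₁ x y z) = C1)
    (hc₁val₁₃ : ∀ y, (∫ x, ∫ z, c₁ x y z) = C1)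
    (hc₁val₂₃ : ∀ x, (∫ y, ∫ z, c₁ x y z) = C1)
    (c₂ : Rd d → Rd d → ℝ) (C2 : ℝ)
    (hc₂meas : Measurable fun p : Rd d × Rd d => c₂ p.1 p.2)
    (hc₂nn : ∀ x y, 0 ≤ c₂ x y)
    (hc₂int₁ : ∀ y, Integrable fun x => c₂ x y)
    (hc₂int₂ : ∀ x, Integrable fun y => c₂ x y)
    (hc₂val₁ : ∀ y, (∫ x, c₂ x y) = C2)
    (hc₂val₂ : ∀ x, (∫ y, c₂ x y) = C2)
    (φ₁ : Rd d → ℝ) (Φ₁ : ℝ) (hφ₁meas : Measurable φ₁) (hφ₁nn : ∀ u, 0 ≤ φ₁ u)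
    (hφ₁int : Integrable φ₁) (hφ₁val : (∫ u, φ₁ u) = Φ₁)
    (φ₂ : Rd d → ℝ) (Φ₂ : ℝ) (hφ₂meas : Measurable φ₂) (hφ₂nn : ∀ u, 0 ≤ φ₂ u)
    (hφ₂int : Integrable φ₂) (hφ₂val : (∫ u, φ₂ u) = Φ₂)
    (ρ₀ : Rd d → ℝ) (hρ₀mem : MemLinf ρ₀) (hρ₀nn : ∀ x, 0 ≤ ρ₀ x)
    (r : ℝ) (hr : linf ρ₀ ≤ r)
    (γ Tmax : ℝ) (hγ : 0 < γ) (hTmax : 0 < Tmax)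
    (hF : ∀ T : ℝ, 0 ≤ T → T ≤ Tmax → ∀ ρ : ℝ → Rd d → ℝ, memB T γ C2 r ρ →
      memB T γ C2 r (Fmap c₁ c₂ φ₁ φ₂ C2 ρ₀ ρ)) :
    ∃ T' : ℝ, 0 < T' ∧ T' ≤ Tmax ∧ ∃ C : ℝ, C < 1 ∧
      ∀ ρ ψ : ℝ → Rd d → ℝ, memB T' γ C2 r ρ → memB T' γ C2 r ψ →
        ρ 0 = ρ₀ → ψ 0 = ρ₀ →
        normTg T' γ C2
            (fun t x => Fmap c₁ c₂ φ₁ φ₂ C2 ρ₀ ρ t x - Fmap c₁ c₂ φ₁ φ₂ C2 ρ₀ ψ t x)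
          ≤ C * normTg T' γ C2 (fun t x => ρ t x - ψ t x) :=
  statement2_general c₁ C1 hc₁nn hc₁int₁₂ hc₁int₁₃ hc₁int₂₃ hc₁val₁₂ hc₁val₁₃ hc₁val₂₃ c₂ C2 hc₂nn
    hc₂int₁ hc₂int₂ hc₂val₁ hc₂val₂ φ₁ Φ₁ hφ₁meas hφ₁nn hφ₁int hφ₁val φ₂ Φ₂ hφ₂meas hφ₂nn hφ₂int
    hφ₂val ρ₀ hρ₀mem r hr γ Tmax hγ hTmax
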